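/- Let P be a polynomial with real coefficients and let x be a real number. Then the limit as the real number h tends to 0 (with h ≠ 0) of Im(P(x + i h)) / h equals P'(x), the derivative of P evaluated at x. -/

import Mathlib

/-!
Since `P` has real coefficients, `g h = Im P(x + i h)` vanishes at `h = 0`, so `g h / h` is the
difference quotient of `g` at `0`. By the chain rule `g' 0 = Im (P'(x) · i) = P'(x)`, again
because `P'(x)` is real.
-/

open Complex Filter

theorem HasDerivAt.tendsto_div_of_apply_zero_eq_zero {𝕜 : Type*} [NontriviallyNormedField 𝕜]
    {f : 𝕜 → 𝕜} {f' : 𝕜} (hf : HasDerivAt f f' 0) (hf0 : f 0 = 0) :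
    Tendsto (fun h => f h / h) (nhdsWithin 0 {0}ᶜ) (nhds f') := by
  simpa [hf0, div_eq_inv_mul] using hf.tendsto_slope_zero

namespace Polynomial

theorem aeval_ofReal_complex (P : ℝ[X]) (x : ℝ) : aeval (x : ℂ) P = P.eval x :=
  aeval_ofReal P x

theorem hasDerivAt_aeval_add_mul_ofReal (P : ℝ[X]) (z w : ℂ) (t : ℝ) :
    HasDerivAt (fun s : ℝ => aeval (z + w * s) P) (aeval (z + w * t) (derivative P) * w) t := by
  have hline : HasDerivAt (fun s : ℝ => z + w * s) w t := by
    simpa using ((hasDerivAt_id (t : ℂ)).const_mul w).const_add z |>.comp_ofReal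
  exact (P.hasDerivAt_aeval _).comp t hline

theorem hasDerivAt_im_aeval_add_I_mul (P : ℝ[X]) (x : ℝ) :
    HasDerivAt (fun h : ℝ => (aeval ((x : ℂ) + I * h) P).im) (P.derivative.eval x) 0 := by
  refine (imCLM.hasFDerivAt.comp_hasDerivAt 0
    (P.hasDerivAt_aeval_add_mul_ofReal x I 0)).congr_deriv ?_
  simp [aeval_ofReal_complex]

end Polynomial

theorem squire_trapp_limit_is_derivative (P : Polynomial ℝ) (x : ℝ) :
    Tendsto (fun h : ℝ => ((Polynomial.aeval ((x : ℂ) + I * h)) P).im / h)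
      (nhdsWithin 0 {h : ℝ | h ≠ 0}) (nhds (P.derivative.eval x)) :=
  (P.hasDerivAt_im_aeval_add_I_mul x).tendsto_div_of_apply_zero_eq_zero
    (by simp [Polynomial.aeval_ofReal_complex])
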